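/- arXiv:1001.4470 — 5 statements merged into one kernel-verified Lean document; each statement's English description precedes it below -/
import Mathlib

section
/- D ∈ A if and only if for every irreducible element P ∈ A, whenever some irreducible factor of P in B is ramified, every irreducible factor of P in B is ramified. -/
noncomputable section

open MvPolynomial

/-- The multiplicity of `Q` in the factorization of `P` equals `e`. -/
def MultIs {σ : Type} (Q P : MvPolynomial σ ℂ) (e : ℕ) : Prop :=
  Q ^ e ∣ P ∧ ¬ Q ^ (e + 1) ∣ P

/-- The Jacobian `det (∂ f i / ∂ X j)` of an `n`-tuple of polynomials. -/
def Jac {n : ℕ} (f : Fin n → MvPolynomial (Fin n) ℂ) : MvPolynomial (Fin n) ℂ :=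
  (Matrix.of fun i j : Fin n => pderiv j (f i)).det

/-- `RamIdx A Q e` : the contraction `QB ∩ A` is generated by an irreducible `P ∈ A`,
and `e` is the multiplicity of `Q` in the factorization of `P` in `B`. -/
def RamIdx {σ : Type} (A : Subalgebra ℂ (MvPolynomial σ ℂ))
    (Q : MvPolynomial σ ℂ) (e : ℕ) : Prop :=
  ∃ P : A, Irreducible P ∧
    (Ideal.span {Q}).comap (algebraMap A (MvPolynomial σ ℂ)) = Ideal.span {P} ∧
    MultIs Q (P : MvPolynomial σ ℂ) e

/-- `Q` is a ramified irreducible of `B` over `A`. -/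
def IsRamified {σ : Type} (A : Subalgebra ℂ (MvPolynomial σ ℂ))
    (Q : MvPolynomial σ ℂ) : Prop :=
  Irreducible Q ∧ ∃ e, RamIdx A Q e ∧ 1 < e

/-- `RamReps A S e` : `S` is a finite set of pairwise non-associated irreducible elements of `B`,
each ramified with ramification index `e Q`, and every ramified irreducible of `B` is associated
to exactly one element of `S`. -/
def RamReps {σ : Type} (A : Subalgebra ℂ (MvPolynomial σ ℂ))
    (S : Finset (MvPolynomial σ ℂ)) (e : MvPolynomial σ ℂ → ℕ) : Prop :=
  (∀ Q ∈ S, Irreducible Q ∧ RamIdx A Q (e Q) ∧ 1 < e Q) ∧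
  (∀ Q ∈ S, ∀ Q' ∈ S, Q ≠ Q' → ¬ Associated Q Q') ∧
  (∀ Q : MvPolynomial σ ℂ, IsRamified A Q → ∃! Q', Q' ∈ S ∧ Associated Q Q')

/-- The polynomial map `ℂⁿ → ℂⁿ` associated to an `n`-tuple of polynomials. -/
def polyMap {n : ℕ} (f : Fin n → MvPolynomial (Fin n) ℂ) : (Fin n → ℂ) → (Fin n → ℂ) :=
  fun x i => eval x (f i)

/-- The branch locus: points whose fiber has fewer than `r` elements. -/
def branchLocus {n : ℕ} (f : Fin n → MvPolynomial (Fin n) ℂ) (r : ℕ) : Set (Fin n → ℂ) :=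
  {u | (polyMap f ⁻¹' {u}).Finite ∧ (polyMap f ⁻¹' {u}).ncard < r}

end

/-! If `D ∈ A` and an irreducible `P ∈ A` has a ramified factor `Q₀`, then `P` generates the
contraction `Q₀B ∩ A`, which contains `D`; so `P ∣ D` in `A`, and every irreducible factor of `P`
divides `D` and is ramified.

Conversely, grouping the factors of `D` by their contraction writes `D` as a product of blocks
`∏_{QB ∩ A = PA} Q ^ e_Q`. When ramification propagates, the block of `P` contains every
irreducible factor of `P` with its exact multiplicity, so it is associated to `P` in `B`. Units of
`B` are constants, so the block lies in `A`, and hence so does `D`. -/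

theorem prod_pow_associated_of_exact_pow_dvd {α : Type*} [CommMonoidWithZero α]
    [UniqueFactorizationMonoid α] {T : Finset α} {m : α → ℕ} {x : α} (hx : x ≠ 0)
    (hirr : ∀ t ∈ T, Irreducible t) (hpair : (T : Set α).Pairwise fun t s => ¬ Associated t s)
    (hpow : ∀ t ∈ T, t ^ m t ∣ x ∧ ¬ t ^ (m t + 1) ∣ x)
    (hfac : ∀ q, Irreducible q → q ∣ x → ∃ t ∈ T, Associated q t) :
    Associated (∏ t ∈ T, t ^ m t) x := by
  have hcop : (T : Set α).Pairwise (Function.onFun IsRelPrime fun t => t ^ m t) := by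
    intro t ht s hs hts
    refine IsRelPrime.pow <| (hirr t ht).isRelPrime_iff_not_dvd.mpr fun hdvd => hpair ht hs hts ?_
    exact (hirr t ht).associated_of_dvd (hirr s hs) hdvd
  obtain ⟨y, rfl⟩ := Finset.prod_dvd_of_isRelPrime hcop fun t ht => (hpow t ht).1
  suffices hy : IsUnit y from associated_mul_unit_right _ _ hy
  by_contra hy
  obtain ⟨q, hq, hqy⟩ := WfDvdMonoid.exists_irreducible_factor hy (right_ne_zero_of_mul hx)
  obtain ⟨t, ht, hqt⟩ := hfac q hq (hqy.trans (dvd_mul_left y _))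
  refine (hpow t ht).2 ?_
  rw [pow_succ]
  exact mul_dvd_mul (Finset.dvd_prod_of_mem (fun t => t ^ m t) ht) (hqt.symm.dvd.trans hqy)

theorem MvPolynomial.mem_of_associated {R σ : Type*} [CommRing R] [IsReduced R]
    (A : Subalgebra R (MvPolynomial σ R)) {x y : MvPolynomial σ R} (h : Associated x y)
    (hx : x ∈ A) : y ∈ A := by
  obtain ⟨u, rfl⟩ := h
  obtain ⟨c, -, hc⟩ := isUnit_iff_eq_C_of_isReduced.mp u.isUnit
  rw [hc, ← algebraMap_eq]
  exact A.mul_mem hx (A.algebraMap_mem c)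

section Contraction

variable {R B : Type*} [CommRing R] [CommRing B] (φ : R →+* B) {P P' : R} {Q Q' : B}

theorem dvd_iff_of_comap_span_eq (h : (Ideal.span {Q}).comap φ = Ideal.span {P}) (x : R) :
    P ∣ x ↔ Q ∣ φ x := by
  rw [← Ideal.mem_span_singleton, ← h, Ideal.mem_comap, Ideal.mem_span_singleton]

variable [IsDomain R]

theorem comap_span_eq_of_dvd (hP : Irreducible P) (hP' : Irreducible P')
    (h : (Ideal.span {Q}).comap φ = Ideal.span {P})
    (h' : (Ideal.span {Q'}).comap φ = Ideal.span {P'}) (hdvd : Q ∣ φ P') :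
    (Ideal.span {Q}).comap φ = (Ideal.span {Q'}).comap φ := by
  rw [h, h', Ideal.span_singleton_eq_span_singleton]
  exact hP.associated_of_dvd hP' ((dvd_iff_of_comap_span_eq φ h P').mpr hdvd)

theorem associated_of_comap_span_eq (h : (Ideal.span {Q}).comap φ = Ideal.span {P})
    (h' : (Ideal.span {Q'}).comap φ = Ideal.span {P'})
    (heq : (Ideal.span {Q}).comap φ = (Ideal.span {Q'}).comap φ) : Associated P P' := by
  rwa [h, h', Ideal.span_singleton_eq_span_singleton] at heq

end Contraction

section Ramification

variable {σ : Type} {A : Subalgebra ℂ (MvPolynomial σ ℂ)} {Q Q' P P' : MvPolynomial σ ℂ} {e : ℕ}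

theorem MultIs.of_associated (hQ : Associated Q Q') (hP : Associated P P') (h : MultIs Q P e) :
    MultIs Q' P' e := by
  unfold MultIs at h ⊢
  rwa [← hQ.pow_pow.dvd_iff_dvd_left, ← hQ.pow_pow.dvd_iff_dvd_left,
    ← hP.dvd_iff_dvd_right, ← hP.dvd_iff_dvd_right]

theorem IsRamified.of_associated (hQ : Associated Q Q') (h : IsRamified A Q) :
    IsRamified A Q' := by
  obtain ⟨hirr, e, ⟨P, hP, hcomap, hmult⟩, he⟩ := h
  refine ⟨hQ.irreducible hirr, e, ⟨P, hP, ?_, hmult.of_associated hQ (Associated.refl _)⟩, he⟩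
  rwa [← Ideal.span_singleton_eq_span_singleton.mpr hQ]

end Ramification

noncomputable abbrev contraction {σ : Type} (A : Subalgebra ℂ (MvPolynomial σ ℂ))
    (Q : MvPolynomial σ ℂ) : Ideal A :=
  (Ideal.span {Q}).comap (algebraMap A (MvPolynomial σ ℂ))

namespace RamReps

variable {σ : Type} {A : Subalgebra ℂ (MvPolynomial σ ℂ)} {S : Finset (MvPolynomial σ ℂ)}
  {e : MvPolynomial σ ℂ → ℕ}

theorem isRamified (hS : RamReps A S e) {Q : MvPolynomial σ ℂ} (hQ : Q ∈ S) : IsRamified A Q :=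
  ⟨(hS.1 Q hQ).1, e Q, (hS.1 Q hQ).2⟩

theorem dvd_prod_iff (hS : RamReps A S e) {q : MvPolynomial σ ℂ} (hq : Irreducible q) :
    q ∣ ∏ Q ∈ S, Q ^ e Q ↔ IsRamified A q := by
  constructor
  · intro hdvd
    obtain ⟨Q, hQ, hqQ⟩ := hq.prime.exists_mem_finset_dvd hdvd
    have hassoc := hq.associated_of_dvd (hS.1 Q hQ).1 (hq.prime.dvd_of_dvd_pow hqQ)
    exact (hS.isRamified hQ).of_associated hassoc.symm
  · intro hram
    obtain ⟨Q, ⟨hQ, hqQ⟩, -⟩ := hS.2.2 q hram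
    calc q ∣ Q := hqQ.dvd
      _ ∣ Q ^ e Q := dvd_pow_self Q (by have := (hS.1 Q hQ).2.2; omega)
      _ ∣ ∏ Q ∈ S, Q ^ e Q := Finset.dvd_prod_of_mem (fun Q => Q ^ e Q) hQ

theorem isRamified_of_dvd_of_prod_mem (hS : RamReps A S e) (hD : ∏ Q ∈ S, Q ^ e Q ∈ A)
    {P : A} (hP : Irreducible P) {Q₀ Q : MvPolynomial σ ℂ} (hQ₀ : IsRamified A Q₀)
    (hQ₀P : Q₀ ∣ P) (hQ : Irreducible Q) (hQP : Q ∣ P) : IsRamified A Q := by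
  obtain ⟨-, ⟨P₀, hP₀, hcomap, -⟩, -⟩ := hQ₀.2
  have hP₀P : Associated P₀ P :=
    hP₀.associated_of_dvd hP ((dvd_iff_of_comap_span_eq _ hcomap P).mpr hQ₀P)
  have hP₀D : P₀ ∣ ⟨_, hD⟩ :=
    (dvd_iff_of_comap_span_eq _ hcomap _).mpr ((hS.dvd_prod_iff hQ₀.1).mpr hQ₀)
  refine (hS.dvd_prod_iff hQ).mp (hQP.trans ?_)
  exact map_dvd (algebraMap A _) (hP₀P.symm.dvd.trans hP₀D)

open Classical in
theorem prod_contraction_fiber_mem (hS : RamReps A S e)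
    (hprop : ∀ P : A, Irreducible P →
      (∃ Q, Irreducible Q ∧ Q ∣ (P : MvPolynomial σ ℂ) ∧ IsRamified A Q) →
      ∀ Q, Irreducible Q → Q ∣ (P : MvPolynomial σ ℂ) → IsRamified A Q)
    {Q₀ : MvPolynomial σ ℂ} (hQ₀ : Q₀ ∈ S) :
    ∏ Q ∈ S with contraction A Q = contraction A Q₀, Q ^ e Q ∈ A := by
  obtain ⟨P₀, hP₀, hcomap₀, hmult₀⟩ := (hS.1 Q₀ hQ₀).2.1
  refine MvPolynomial.mem_of_associated A
    (prod_pow_associated_of_exact_pow_dvd ?_ ?_ ?_ ?_ ?_).symm P₀.2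
  · exact fun h => hmult₀.2 (h ▸ dvd_zero _)
  · exact fun t ht => (hS.1 t (Finset.mem_filter.mp ht).1).1
  · exact fun t ht s hs => hS.2.1 t (Finset.mem_filter.mp ht).1 s (Finset.mem_filter.mp hs).1
  · intro t ht
    rw [Finset.mem_filter] at ht
    obtain ⟨Pₜ, -, hcomapₜ, hmultₜ⟩ := (hS.1 t ht.1).2.1
    have hPₜP₀ := associated_of_comap_span_eq _ hcomapₜ hcomap₀ ht.2
    exact hmultₜ.of_associated (Associated.refl t) (hPₜP₀.map A.val)
  · intro q hq hqP₀
    have hQ₀P₀ : Q₀ ∣ P₀ := (dvd_iff_of_comap_span_eq _ hcomap₀ P₀).mp dvd_rfl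
    have hram := hprop P₀ hP₀ ⟨Q₀, (hS.1 Q₀ hQ₀).1, hQ₀P₀, hS.isRamified hQ₀⟩ q hq hqP₀
    obtain ⟨t, ⟨ht, hqt⟩, -⟩ := hS.2.2 q hram
    obtain ⟨Pₜ, hPₜ, hcomapₜ, -⟩ := (hS.1 t ht).2.1
    refine ⟨t, Finset.mem_filter.mpr ⟨ht, ?_⟩, hqt⟩
    exact comap_span_eq_of_dvd _ hPₜ hP₀ hcomapₜ hcomap₀ (hqt.symm.dvd.trans hqP₀)

end RamReps

open MvPolynomial in
theorem discriminant_mem_iff_ramified_factors_propagate_general {n : ℕ}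
    (A : Subalgebra ℂ (MvPolynomial (Fin n) ℂ))
    (S : Finset (MvPolynomial (Fin n) ℂ)) (eIdx : MvPolynomial (Fin n) ℂ → ℕ)
    (hS : RamReps A S eIdx) :
    (∏ Q ∈ S, Q ^ eIdx Q) ∈ A ↔
      ∀ P : A, Irreducible P →
        (∃ Q : MvPolynomial (Fin n) ℂ, Irreducible Q ∧ Q ∣ (P : MvPolynomial (Fin n) ℂ) ∧
          IsRamified A Q) →
        ∀ Q : MvPolynomial (Fin n) ℂ, Irreducible Q → Q ∣ (P : MvPolynomial (Fin n) ℂ) →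
          IsRamified A Q := by
  classical
  refine ⟨fun hD P hP ⟨Q₀, _, hQ₀P, hQ₀⟩ Q hQ hQP =>
    hS.isRamified_of_dvd_of_prod_mem hD hP hQ₀ hQ₀P hQ hQP, fun hprop => ?_⟩
  rw [← Finset.prod_fiberwise_of_maps_to fun Q hQ => Finset.mem_image_of_mem (contraction A) hQ]
  refine A.prod_mem fun I hI => ?_
  obtain ⟨Q₀, hQ₀, rfl⟩ := Finset.mem_image.mp hI
  exact hS.prod_contraction_fiber_mem hprop hQ₀

open MvPolynomial in
theorem discriminant_mem_iff_ramified_factors_propagate {n : ℕ} (hn : 0 < n)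
    (b : Fin n → ℕ) (hb : ∀ i, 0 < b i) (a : Fin n → ℕ)
    (f : Fin n → MvPolynomial (Fin n) ℂ)
    (hhom : ∀ i, IsWeightedHomogeneous b (f i) (a i))
    (A : Subalgebra ℂ (MvPolynomial (Fin n) ℂ))
    (hA : A = Algebra.adjoin ℂ (Set.range f))
    (hfin : Module.Finite A (MvPolynomial (Fin n) ℂ))
    (S : Finset (MvPolynomial (Fin n) ℂ)) (eIdx : MvPolynomial (Fin n) ℂ → ℕ)
    (hS : RamReps A S eIdx) :
    (∏ Q ∈ S, Q ^ eIdx Q) ∈ A ↔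
      ∀ P : A, Irreducible P →
        (∃ Q : MvPolynomial (Fin n) ℂ, Irreducible Q ∧ Q ∣ (P : MvPolynomial (Fin n) ℂ) ∧
          IsRamified A Q) →
        ∀ Q : MvPolynomial (Fin n) ℂ, Irreducible Q → Q ∣ (P : MvPolynomial (Fin n) ℂ) →
          IsRamified A Q :=
  discriminant_mem_iff_ramified_factors_propagate_general A S eIdx hS
end

section
/- B is a finitely generated A-module, and the following equalities of ideals of A hold: (X·B) ∩ A = (X²Y³)·A, (Y·B) ∩ A = (X²Y³)·A, and ((X²−Y³)·B) ∩ A = ((X²+Y³)² − 4X²Y³)·A. Consequently, the ramification indices of X, Y and X²−Y³ are respectively 2, 3 and 2. -/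
noncomputable section

open MvPolynomial

/-- The variable `X` of `ℂ[X,Y]`. -/
def Xv : MvPolynomial (Fin 2) ℂ := X 0

/-- The variable `Y` of `ℂ[X,Y]`. -/
def Yv : MvPolynomial (Fin 2) ℂ := X 1

/-- The subalgebra `A = ℂ[X²+Y³, X²Y³]` of `B = ℂ[X,Y]`. -/
def A14 : Subalgebra ℂ (MvPolynomial (Fin 2) ℂ) :=
  Algebra.adjoin ℂ {Xv ^ 2 + Yv ^ 3, Xv ^ 2 * Yv ^ 3}

lemma mem1 : Xv ^ 2 * Yv ^ 3 ∈ A14 :=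
  Algebra.subset_adjoin (Set.mem_insert_of_mem _ rfl)

lemma mem2 : (Xv ^ 2 + Yv ^ 3) ^ 2 - 4 * (Xv ^ 2 * Yv ^ 3) ∈ A14 :=
  A14.sub_mem (A14.pow_mem (Algebra.subset_adjoin (Set.mem_insert _ _)) 2)
    (A14.mul_mem (ofNat_mem A14 4) mem1)

/-! ### Auxiliary machinery -/

local notation "BB" => MvPolynomial (Fin 2) ℂ

lemma aeval_mem (S : Subalgebra ℂ BB) {x : BB} (hx : x ∈ S) (r : Polynomial ℂ) :
    Polynomial.aeval x r ∈ S := by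
  have : Algebra.adjoin ℂ {x} ≤ S := Algebra.adjoin_le (by simpa using hx)
  apply this
  rw [Algebra.adjoin_singleton_eq_range_aeval]
  exact ⟨r, rfl⟩

/-- Any element of `ℂ[u', v']` decomposes as `v' * b + r(u')`. -/
lemma decomp (u' v' : BB) {a : BB} (ha : a ∈ Algebra.adjoin ℂ {u', v'}) :
    ∃ b ∈ Algebra.adjoin ℂ {u', v'}, ∃ r : Polynomial ℂ,
      a = v' * b + Polynomial.aeval u' r := by
  induction ha using Algebra.adjoin_induction with
  | mem x hx =>
      rcases hx with rfl | hx
      · exact ⟨0, Subalgebra.zero_mem _, Polynomial.X, by simp⟩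
      · rw [Set.mem_singleton_iff] at hx
        subst hx
        exact ⟨1, Subalgebra.one_mem _, 0, by simp⟩
  | algebraMap c => exact ⟨0, Subalgebra.zero_mem _, Polynomial.C c, by simp⟩
  | add x y hx hy ihx ihy =>
      obtain ⟨b1, hb1, r1, rfl⟩ := ihx
      obtain ⟨b2, hb2, r2, rfl⟩ := ihy
      exact ⟨b1 + b2, add_mem hb1 hb2, r1 + r2, by rw [map_add]; ring⟩
  | mul x y hx hy ihx ihy =>
      obtain ⟨b1, hb1, r1, rfl⟩ := ihx
      obtain ⟨b2, hb2, r2, rfl⟩ := ihy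
      have hu' : u' ∈ Algebra.adjoin ℂ {u', v'} := Algebra.subset_adjoin (Set.mem_insert _ _)
      refine ⟨v' * b1 * b2 + b1 * Polynomial.aeval u' r2 + b2 * Polynomial.aeval u' r1,
        ?_, r1 * r2, by rw [map_mul]; ring⟩
      exact add_mem (add_mem (mul_mem (mul_mem (Algebra.subset_adjoin
        (Set.mem_insert_of_mem _ rfl)) hb1) hb2)
        (mul_mem hb1 (aeval_mem _ hu' r2))) (mul_mem hb2 (aeval_mem _ hu' r1))

/-- If a substitution kills `Q` but sends `u'` to a nonconstant polynomial, then
`Q ∣ r(u')` forces `r = 0`. -/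
lemma kill (Q u' : BB) (ψ : BB →ₐ[ℂ] Polynomial ℂ) (hQ : ψ Q = 0)
    (hu : (ψ u').natDegree ≠ 0) {r : Polynomial ℂ}
    (h : Q ∣ Polynomial.aeval u' r) : r = 0 := by
  obtain ⟨c, hc⟩ := h
  have h0 : ψ (Polynomial.aeval u' r) = 0 := by rw [hc, map_mul, hQ, zero_mul]
  rw [← Polynomial.aeval_algHom_apply, ← Polynomial.comp_eq_aeval] at h0
  rcases Polynomial.comp_eq_zero_iff.mp h0 with h1 | ⟨_, h1⟩
  · exact h1
  · exact absurd (by rw [h1]; simp) hu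

lemma contract (Q u' v' : BB) (hQv : Q ∣ v')
    (ψ : BB →ₐ[ℂ] Polynomial ℂ) (hQ : ψ Q = 0) (hu : (ψ u').natDegree ≠ 0)
    {a : BB} (ha : a ∈ Algebra.adjoin ℂ {u', v'}) (hdvd : Q ∣ a) :
    ∃ b ∈ Algebra.adjoin ℂ {u', v'}, a = v' * b := by
  obtain ⟨b, hb, r, rfl⟩ := decomp u' v' ha
  have h1 : Q ∣ Polynomial.aeval u' r := (dvd_add_right (hQv.mul_right b)).mp hdvd
  rw [kill Q u' ψ hQ hu h1]
  exact ⟨b, hb, by simp⟩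

lemma memu : Xv ^ 2 + Yv ^ 3 ∈ A14 := Algebra.subset_adjoin (Set.mem_insert _ _)

def ψX : BB →ₐ[ℂ] Polynomial ℂ := aeval ![0, Polynomial.X]
def ψY : BB →ₐ[ℂ] Polynomial ℂ := aeval ![Polynomial.X, 0]
def ψW : BB →ₐ[ℂ] Polynomial ℂ := aeval ![Polynomial.X ^ 3, Polynomial.X ^ 2]

lemma ψX_Q : ψX Xv = 0 := by simp [ψX, Xv]
lemma ψX_u : (ψX (Xv ^ 2 + Yv ^ 3)).natDegree ≠ 0 := by
  have : ψX (Xv ^ 2 + Yv ^ 3) = Polynomial.X ^ 3 := by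
    simp [ψX, Xv, Yv]
  rw [this, Polynomial.natDegree_X_pow]; norm_num

lemma ψY_Q : ψY Yv = 0 := by simp [ψY, Yv]
lemma ψY_u : (ψY (Xv ^ 2 + Yv ^ 3)).natDegree ≠ 0 := by
  have : ψY (Xv ^ 2 + Yv ^ 3) = Polynomial.X ^ 2 := by
    simp [ψY, Xv, Yv]
  rw [this, Polynomial.natDegree_X_pow]; norm_num

lemma ψW_Q : ψW (Xv ^ 2 - Yv ^ 3) = 0 := by
  simp [ψW, Xv, Yv]; ring

lemma ψW_u : (ψW (Xv ^ 2 + Yv ^ 3)).natDegree ≠ 0 := by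
  have : ψW (Xv ^ 2 + Yv ^ 3) = Polynomial.C 2 * Polynomial.X ^ 6 := by
    rw [map_ofNat]
    simp [ψW, Xv, Yv]; ring
  rw [this, Polynomial.natDegree_C_mul (by norm_num), Polynomial.natDegree_X_pow]
  norm_num

/-- `A14` is also generated by `X²+Y³` and `(X²+Y³)² − 4X²Y³`. -/
lemma adjoinE : Algebra.adjoin ℂ
    {Xv ^ 2 + Yv ^ 3, (Xv ^ 2 + Yv ^ 3) ^ 2 - 4 * (Xv ^ 2 * Yv ^ 3)} = A14 := by
  apply le_antisymm
  · apply Algebra.adjoin_le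
    intro x hx
    rcases hx with rfl | hx
    · exact memu
    · rw [Set.mem_singleton_iff] at hx; subst hx
      exact mem2
  · apply Algebra.adjoin_le
    intro x hx
    set S := Algebra.adjoin ℂ {Xv ^ 2 + Yv ^ 3, (Xv ^ 2 + Yv ^ 3) ^ 2 - 4 * (Xv ^ 2 * Yv ^ 3)}
    have hu : Xv ^ 2 + Yv ^ 3 ∈ S := Algebra.subset_adjoin (Set.mem_insert _ _)
    have hw : (Xv ^ 2 + Yv ^ 3) ^ 2 - 4 * (Xv ^ 2 * Yv ^ 3) ∈ S :=
      Algebra.subset_adjoin (Set.mem_insert_of_mem _ rfl)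
    rcases hx with rfl | hx
    · exact hu
    · rw [Set.mem_singleton_iff] at hx; subst hx
      have key : Xv ^ 2 * Yv ^ 3 = (C (4⁻¹ : ℂ) : BB) *
          ((Xv ^ 2 + Yv ^ 3) ^ 2 - ((Xv ^ 2 + Yv ^ 3) ^ 2 - 4 * (Xv ^ 2 * Yv ^ 3))) := by
        have h4 : (4 : BB) = C (4 : ℂ) := by rw [← MvPolynomial.algebraMap_eq, map_ofNat]
        rw [sub_sub_cancel, h4, ← mul_assoc, ← C_mul]
        norm_num
      rw [key]
      exact S.mul_mem (by rw [← MvPolynomial.algebraMap_eq]; exact S.algebraMap_mem _)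
        (S.sub_mem (S.pow_mem hu 2) hw)

/-! ### Integrality and finiteness -/

lemma int_of_mem {x : BB} (h : x ∈ A14) : IsIntegral A14 x :=
  ⟨Polynomial.X - Polynomial.C ⟨x, h⟩, Polynomial.monic_X_sub_C _, by
    simp only [Polynomial.eval₂_sub, Polynomial.eval₂_X, Polynomial.eval₂_C]
    exact sub_self x⟩

lemma intX : IsIntegral A14 Xv := by
  refine ⟨Polynomial.X ^ 4 + (Polynomial.C ⟨Xv ^ 2 * Yv ^ 3, mem1⟩
    - Polynomial.C ⟨Xv ^ 2 + Yv ^ 3, memu⟩ * Polynomial.X ^ 2), ?_, ?_⟩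
  · apply Polynomial.monic_X_pow_add
    calc Polynomial.degree _ ≤ _ := Polynomial.degree_sub_le _ _
    _ < 4 := by
        apply max_lt
        · exact lt_of_le_of_lt (Polynomial.degree_C_le) (by norm_num)
        · apply lt_of_le_of_lt (Polynomial.degree_mul_le _ _)
          have h1 := Polynomial.degree_C_le (a := (⟨Xv ^ 2 + Yv ^ 3, memu⟩ : A14))
          have h2 : (Polynomial.X ^ 2 : Polynomial A14).degree ≤ 2 :=
            le_of_eq (Polynomial.degree_X_pow 2)
          calc _ ≤ 0 + 2 := add_le_add h1 h2
            _ < 4 := by norm_num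
  · simp only [Polynomial.eval₂_add, Polynomial.eval₂_sub, Polynomial.eval₂_mul,
      Polynomial.eval₂_pow, Polynomial.eval₂_X, Polynomial.eval₂_C]
    show Xv ^ 4 + (Xv ^ 2 * Yv ^ 3 - (Xv ^ 2 + Yv ^ 3) * Xv ^ 2) = 0
    ring

lemma intY : IsIntegral A14 Yv := by
  refine ⟨Polynomial.X ^ 6 + (Polynomial.C ⟨Xv ^ 2 * Yv ^ 3, mem1⟩
    - Polynomial.C ⟨Xv ^ 2 + Yv ^ 3, memu⟩ * Polynomial.X ^ 3), ?_, ?_⟩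
  · apply Polynomial.monic_X_pow_add
    calc Polynomial.degree _ ≤ _ := Polynomial.degree_sub_le _ _
    _ < 6 := by
        apply max_lt
        · exact lt_of_le_of_lt (Polynomial.degree_C_le) (by norm_num)
        · apply lt_of_le_of_lt (Polynomial.degree_mul_le _ _)
          have h1 := Polynomial.degree_C_le (a := (⟨Xv ^ 2 + Yv ^ 3, memu⟩ : A14))
          have h2 : (Polynomial.X ^ 3 : Polynomial A14).degree ≤ 3 :=
            le_of_eq (Polynomial.degree_X_pow 3)
          calc _ ≤ 0 + 3 := add_le_add h1 h2
            _ < 6 := by norm_num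
  · simp only [Polynomial.eval₂_add, Polynomial.eval₂_sub, Polynomial.eval₂_mul,
      Polynomial.eval₂_pow, Polynomial.eval₂_X, Polynomial.eval₂_C]
    show Yv ^ 6 + (Xv ^ 2 * Yv ^ 3 - (Xv ^ 2 + Yv ^ 3) * Yv ^ 3) = 0
    ring

lemma integralB : Algebra.IsIntegral A14 BB := by
  constructor
  intro z
  induction z using MvPolynomial.induction_on with
  | C a => exact int_of_mem (by rw [← MvPolynomial.algebraMap_eq]; exact A14.algebraMap_mem a)
  | add p q hp hq => exact hp.add hq
  | mul_X p i hp =>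
      apply hp.mul
      fin_cases i
      · exact intX
      · exact intY

lemma finB : Module.Finite A14 BB := by
  have := integralB
  have : Algebra.FiniteType A14 BB :=
    Algebra.FiniteType.of_restrictScalars_finiteType (R := ℂ) (S := A14) (A := BB)
  exact Algebra.IsIntegral.finite

/-! ### The contracted ideals -/

lemma span_eq (Q w' : BB) (hw : w' ∈ A14) (hQw : Q ∣ w')
    (main : ∀ a : A14, Q ∣ (a : BB) → ∃ b ∈ A14, (a : BB) = w' * b) :
    (Ideal.span {Q}).comap (algebraMap A14 BB) = Ideal.span {(⟨w', hw⟩ : A14)} := by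
  ext a
  rw [Ideal.mem_comap, Ideal.mem_span_singleton, Ideal.mem_span_singleton]
  constructor
  · intro h
    obtain ⟨b, hb, hab⟩ := main a h
    exact ⟨⟨b, hb⟩, Subtype.ext hab⟩
  · rintro ⟨c, rfl⟩
    exact Dvd.dvd.mul_right hQw _

/-! ### Non-divisibility via evaluation -/

lemma not_dvd_of_ev {Q P : BB} (p : Fin 2 → ℂ) (hQ : eval p Q = 0) (hP : eval p P ≠ 0) :
    ¬ Q ∣ P := by
  rintro ⟨c, rfl⟩
  apply hP
  rw [map_mul, hQ, zero_mul]

lemma multX : (Xv ^ 2 ∣ Xv ^ 2 * Yv ^ 3) ∧ ¬ Xv ^ 3 ∣ Xv ^ 2 * Yv ^ 3 := by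
  constructor
  · exact ⟨Yv ^ 3, rfl⟩
  · intro h
    have h2 : Xv ^ 2 * Xv ∣ Xv ^ 2 * Yv ^ 3 := by rwa [← pow_succ]
    have hx : (Xv ^ 2 : BB) ≠ 0 := pow_ne_zero _ (X_ne_zero 0)
    have : Xv ∣ Yv ^ 3 := (mul_dvd_mul_iff_left hx).mp h2
    exact not_dvd_of_ev (Q := Xv) (P := Yv ^ 3) ![0, 1]
      (by simp [Xv]) (by simp [Yv]) this

lemma multY : (Yv ^ 3 ∣ Xv ^ 2 * Yv ^ 3) ∧ ¬ Yv ^ 4 ∣ Xv ^ 2 * Yv ^ 3 := by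
  constructor
  · exact ⟨Xv ^ 2, by ring⟩
  · intro h
    have h2 : Yv ^ 3 * Yv ∣ Yv ^ 3 * Xv ^ 2 := by rw [← pow_succ]; rwa [mul_comm (Xv ^ 2)] at h
    have hy : (Yv ^ 3 : BB) ≠ 0 := pow_ne_zero _ (X_ne_zero 1)
    have : Yv ∣ Xv ^ 2 := (mul_dvd_mul_iff_left hy).mp h2
    exact not_dvd_of_ev (Q := Yv) (P := Xv ^ 2) ![1, 0]
      (by simp [Yv]) (by simp [Xv]) this

lemma weq : (Xv ^ 2 + Yv ^ 3) ^ 2 - 4 * (Xv ^ 2 * Yv ^ 3) = (Xv ^ 2 - Yv ^ 3) ^ 2 := by ring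

lemma multW : ((Xv ^ 2 - Yv ^ 3) ^ 2 ∣ (Xv ^ 2 + Yv ^ 3) ^ 2 - 4 * (Xv ^ 2 * Yv ^ 3)) ∧
    ¬ (Xv ^ 2 - Yv ^ 3) ^ 3 ∣ (Xv ^ 2 + Yv ^ 3) ^ 2 - 4 * (Xv ^ 2 * Yv ^ 3) := by
  rw [weq]
  constructor
  · exact dvd_rfl
  · intro h
    have h2 : (Xv ^ 2 - Yv ^ 3) ^ 2 * (Xv ^ 2 - Yv ^ 3) ∣ (Xv ^ 2 - Yv ^ 3) ^ 2 * 1 := by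
      rw [← pow_succ, mul_one]; exact h
    have hq : (Xv ^ 2 - Yv ^ 3 : BB) ≠ 0 := by
      intro h0
      have := congrArg (eval ![1, 0]) h0
      simp [Xv, Yv] at this
    have hne : ((Xv ^ 2 - Yv ^ 3) ^ 2 : BB) ≠ 0 := pow_ne_zero _ hq
    have : Xv ^ 2 - Yv ^ 3 ∣ 1 := (mul_dvd_mul_iff_left hne).mp h2
    exact not_dvd_of_ev (Q := Xv ^ 2 - Yv ^ 3) (P := 1) ![0, 0]
      (by simp [Xv, Yv]) (by simp) this

theorem example_well_ramified_not_galois :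
    Module.Finite A14 (MvPolynomial (Fin 2) ℂ) ∧
    (Ideal.span {Xv}).comap (algebraMap A14 (MvPolynomial (Fin 2) ℂ)) =
      Ideal.span {(⟨Xv ^ 2 * Yv ^ 3, mem1⟩ : A14)} ∧
    (Ideal.span {Yv}).comap (algebraMap A14 (MvPolynomial (Fin 2) ℂ)) =
      Ideal.span {(⟨Xv ^ 2 * Yv ^ 3, mem1⟩ : A14)} ∧
    (Ideal.span {Xv ^ 2 - Yv ^ 3}).comap (algebraMap A14 (MvPolynomial (Fin 2) ℂ)) =
      Ideal.span {(⟨(Xv ^ 2 + Yv ^ 3) ^ 2 - 4 * (Xv ^ 2 * Yv ^ 3), mem2⟩ : A14)} ∧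
    MultIs Xv (Xv ^ 2 * Yv ^ 3) 2 ∧
    MultIs Yv (Xv ^ 2 * Yv ^ 3) 3 ∧
    MultIs (Xv ^ 2 - Yv ^ 3) ((Xv ^ 2 + Yv ^ 3) ^ 2 - 4 * (Xv ^ 2 * Yv ^ 3)) 2 := by
  refine ⟨finB, ?_, ?_, ?_, multX, multY, multW⟩
  · apply span_eq Xv _ mem1 ⟨Xv * Yv ^ 3, by ring⟩
    intro a hdvd
    exact contract Xv (Xv ^ 2 + Yv ^ 3) (Xv ^ 2 * Yv ^ 3) ⟨Xv * Yv ^ 3, by ring⟩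
      ψX ψX_Q ψX_u a.2 hdvd
  · apply span_eq Yv _ mem1 ⟨Xv ^ 2 * Yv ^ 2, by ring⟩
    intro a hdvd
    exact contract Yv (Xv ^ 2 + Yv ^ 3) (Xv ^ 2 * Yv ^ 3) ⟨Xv ^ 2 * Yv ^ 2, by ring⟩
      ψY ψY_Q ψY_u a.2 hdvd
  · apply span_eq (Xv ^ 2 - Yv ^ 3) _ mem2 ⟨Xv ^ 2 - Yv ^ 3, by rw [weq]; ring⟩
    intro a hdvd
    have ha : (a : BB) ∈ Algebra.adjoin ℂ
        {Xv ^ 2 + Yv ^ 3, (Xv ^ 2 + Yv ^ 3) ^ 2 - 4 * (Xv ^ 2 * Yv ^ 3)} := by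
      rw [adjoinE]; exact a.2
    obtain ⟨b, hb, hab⟩ := contract (Xv ^ 2 - Yv ^ 3) (Xv ^ 2 + Yv ^ 3)
      ((Xv ^ 2 + Yv ^ 3) ^ 2 - 4 * (Xv ^ 2 * Yv ^ 3))
      ⟨Xv ^ 2 - Yv ^ 3, by rw [weq]; ring⟩ ψW ψW_Q ψW_u ha hdvd
    exact ⟨b, by rwa [adjoinE] at hb, hab⟩
end
end

section
/- There is no finite group G of ℂ-algebra automorphisms of ℂ[X,Y] whose fixed subalgebra ℂ[X,Y]^G equals the ℂ-subalgebra generated by X²+Y³ and X²Y³; that is, the extension ℂ[X²+Y³, X²Y³] ⊆ ℂ[X,Y] is not Galois. -/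
noncomputable section

open MvPolynomial

/-- `Y³` is not a square in `ℂ[X,Y]`. -/
lemma yv_cube_not_square (p : MvPolynomial (Fin 2) ℂ) : p ^ 2 ≠ Yv ^ 3 := by
  intro h
  have := congrArg (aeval (![0, Polynomial.X] : Fin 2 → Polynomial ℂ)) h
  rw [map_pow, map_pow] at this
  have hy : aeval (![0, Polynomial.X] : Fin 2 → Polynomial ℂ) Yv = Polynomial.X := by
    simp [Yv]
  rw [hy] at this
  have hdeg := congrArg Polynomial.natDegree this
  rw [Polynomial.natDegree_pow, Polynomial.natDegree_X_pow] at hdeg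
  omega

/-- `X²` is not in `A`. -/
lemma xv_sq_not_mem : Xv ^ 2 ∉ A14 := by
  intro h
  set φ₁ : MvPolynomial (Fin 2) ℂ →ₐ[ℂ] ℂ := aeval ![1, 4]
  set φ₂ : MvPolynomial (Fin 2) ℂ →ₐ[ℂ] ℂ := aeval ![8, 1]
  have hle : A14 ≤ AlgHom.equalizer φ₁ φ₂ := by
    rw [A14, Algebra.adjoin_le_iff]
    rintro x (rfl | rfl) <;>
      rw [SetLike.mem_coe, AlgHom.mem_equalizer] <;> simp [φ₁, φ₂, Xv, Yv] <;> norm_num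
  have := hle h
  have h1 : φ₁ (Xv ^ 2) = 1 := by simp [φ₁, Xv]
  have h2 : φ₂ (Xv ^ 2) = 64 := by simp [φ₂, Xv]; norm_num
  rw [AlgHom.mem_equalizer] at this
  rw [h1, h2] at this
  norm_num at this

theorem example_not_galois :
    ∀ G : Subgroup (MvPolynomial (Fin 2) ℂ ≃ₐ[ℂ] MvPolynomial (Fin 2) ℂ),
      (G : Set (MvPolynomial (Fin 2) ℂ ≃ₐ[ℂ] MvPolynomial (Fin 2) ℂ)).Finite →
      ¬ (∀ x : MvPolynomial (Fin 2) ℂ, (∀ g ∈ G, g x = x) ↔ x ∈ A14) := by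
  intro G _ h
  apply xv_sq_not_mem
  rw [← h (Xv ^ 2)]
  intro g hg
  have hu : g (Xv ^ 2 + Yv ^ 3) = Xv ^ 2 + Yv ^ 3 :=
    (h _).mpr (Algebra.subset_adjoin (Set.mem_insert _ _)) g hg
  have hv : g (Xv ^ 2 * Yv ^ 3) = Xv ^ 2 * Yv ^ 3 :=
    (h _).mpr (Algebra.subset_adjoin (Set.mem_insert_of_mem _ rfl)) g hg
  rw [map_add, map_pow, map_pow] at hu
  rw [map_mul, map_pow, map_pow] at hv
  set a := g Xv ^ 2
  set b := g Yv ^ 3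
  have key : (a - Xv ^ 2) * (a - Yv ^ 3) = 0 := by linear_combination a * hu - hv
  rcases mul_eq_zero.mp key with h0 | h0
  · rw [map_pow]
    exact sub_eq_zero.mp h0
  · exact absurd (sub_eq_zero.mp h0) (yv_cube_not_square (g Xv))
end
end

section
/- B = ℂ[X,Y] is a free module of rank 4 over the ℂ-subalgebra A generated by X²Y and X²+Y. -/
noncomputable section

open MvPolynomial

/-- The subalgebra `A = ℂ[X²Y, X²+Y]` of `B = ℂ[X,Y]`. -/
def A16 : Subalgebra ℂ (MvPolynomial (Fin 2) ℂ) :=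
  Algebra.adjoin ℂ {Xv ^ 2 * Yv, Xv ^ 2 + Yv}

/-!
Write `u = X²Y` and `v = X² + Y`. Since `Y = v - X²` and `X⁴ - vX² + u = 0`, the powers
`1, X, X², X³` span `B` over `A`. For their independence, the automorphism `X ↦ -X` fixes `A`, so
a relation `∑ aᵢXⁱ = 0` splits into `a₀ + a₂X² = 0` and `a₁ + a₃X² = 0`. A relation `a + bX² = 0`
is sent by `expand 2` and by `X ↦ Y, Y ↦ X⁴` to `a' + b'X⁴ = 0` and `a' + b'Y² = 0` with the same
`a', b'`: both maps send `u, v` to the product and the sum of `X⁴` and `Y²`. Hence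
`b'(X⁴ - Y²) = 0`, and `b = 0` because `expand 2` is injective.
-/

namespace A16

local notation "B" => MvPolynomial (Fin 2) ℂ

lemma Xv_sq_mul_Yv_mem : Xv ^ 2 * Yv ∈ A16 := Algebra.subset_adjoin (by simp)

lemma Xv_sq_add_Yv_mem : Xv ^ 2 + Yv ∈ A16 := Algebra.subset_adjoin (by simp)

def negX : B →ₐ[ℂ] B := aeval ![-Xv, Yv]

def swapX4 : B →ₐ[ℂ] B := aeval ![Yv, Xv ^ 4]

lemma negX_Xv : negX Xv = -Xv := by simp [negX, Xv]

lemma negX_apply_of_mem {a : B} (ha : a ∈ A16) : negX a = a := by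
  refine AlgHom.eqOn_adjoin_iff (φ := negX) (ψ := AlgHom.id ℂ B) |>.mpr ?_ ha
  rintro _ (rfl | rfl) <;> simp [negX, Xv, Yv]

lemma expand_two_eq_swapX4_of_mem {a : B} (ha : a ∈ A16) : expand 2 a = swapX4 a := by
  refine AlgHom.eqOn_adjoin_iff (φ := expand 2) (ψ := swapX4) |>.mpr ?_ ha
  rintro _ (rfl | rfl) <;> simp [swapX4, Xv, Yv] <;> ring

lemma eq_zero_of_add_mul_Xv_sq_eq_zero {a b : B} (ha : a ∈ A16) (hb : b ∈ A16)
    (h : a + b * Xv ^ 2 = 0) : a = 0 ∧ b = 0 := by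
  have h₁ : expand 2 a + expand 2 b * Xv ^ 4 = 0 := by
    simpa [Xv, ← pow_mul] using congrArg (expand 2) h
  have h₂ : expand 2 a + expand 2 b * Yv ^ 2 = 0 := by
    have h' := congrArg swapX4 h
    rw [map_add, map_mul, map_pow, map_zero, ← expand_two_eq_swapX4_of_mem ha,
      ← expand_two_eq_swapX4_of_mem hb] at h'
    simpa [swapX4, Xv] using h'
  have hXY : (Xv ^ 4 - Yv ^ 2 : B) ≠ 0 := by
    intro h0
    simpa [Xv, Yv] using congrArg (eval ![1, 0]) h0
  have hb0 : b = 0 := by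
    refine expand_injective two_pos ?_
    simpa [hXY] using (by linear_combination h₁ - h₂ : expand 2 b * (Xv ^ 4 - Yv ^ 2) = 0)
  exact ⟨by simpa [hb0] using h, hb0⟩

lemma eq_zero_of_cubic_eq_zero {a₀ a₁ a₂ a₃ : B} (h₀ : a₀ ∈ A16) (h₁ : a₁ ∈ A16)
    (h₂ : a₂ ∈ A16) (h₃ : a₃ ∈ A16) (h : a₀ + a₁ * Xv + a₂ * Xv ^ 2 + a₃ * Xv ^ 3 = 0) :
    a₀ = 0 ∧ a₁ = 0 ∧ a₂ = 0 ∧ a₃ = 0 := by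
  have h' : a₀ - a₁ * Xv + a₂ * Xv ^ 2 - a₃ * Xv ^ 3 = 0 := by
    have hneg := congrArg negX h
    simp only [map_add, map_mul, map_pow, map_zero, negX_Xv, negX_apply_of_mem h₀,
      negX_apply_of_mem h₁, negX_apply_of_mem h₂, negX_apply_of_mem h₃] at hneg
    linear_combination hneg
  have heven : a₀ + a₂ * Xv ^ 2 = 0 :=
    (mul_eq_zero.mp (by linear_combination h + h' : (2 : B) * (a₀ + a₂ * Xv ^ 2) = 0)).resolve_left
      two_ne_zero
  have hodd : a₁ + a₃ * Xv ^ 2 = 0 :=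
    (mul_eq_zero.mp (by linear_combination h - h' : 2 * Xv * (a₁ + a₃ * Xv ^ 2) = 0)).resolve_left
      (mul_ne_zero two_ne_zero (X_ne_zero 0))
  obtain ⟨rfl, rfl⟩ := eq_zero_of_add_mul_Xv_sq_eq_zero h₀ h₂ heven
  obtain ⟨rfl, rfl⟩ := eq_zero_of_add_mul_Xv_sq_eq_zero h₁ h₃ hodd
  exact ⟨rfl, rfl, rfl, rfl⟩

lemma linearIndependent_Xv_pow : LinearIndependent A16 fun i : Fin 4 => Xv ^ (i : ℕ) := by
  refine Fintype.linearIndependent_iff.mpr fun g hg => ?_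
  rw [Fin.sum_univ_four] at hg
  obtain ⟨h₀, h₁, h₂, h₃⟩ := eq_zero_of_cubic_eq_zero (g 0).2 (g 1).2 (g 2).2 (g 3).2
    (by simpa [Algebra.smul_def] using hg)
  intro i
  fin_cases i <;> exact Subtype.ext ‹_›

lemma adjoin_Xv_eq_top : Algebra.adjoin A16 {Xv} = ⊤ := by
  have hY : Yv ∈ Algebra.adjoin A16 {Xv} := by
    rw [show Yv = algebraMap A16 B ⟨_, Xv_sq_add_Yv_mem⟩ - Xv ^ 2 by simp]
    exact sub_mem (Subalgebra.algebraMap_mem _ _)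
      (pow_mem (Algebra.self_mem_adjoin_singleton _ _) 2)
  refine Subalgebra.restrictScalars_injective ℂ ?_
  rw [Subalgebra.restrictScalars_top, eq_top_iff, ← adjoin_range_X, Algebra.adjoin_le_iff]
  rintro _ ⟨i, rfl⟩
  fin_cases i
  · exact Algebra.self_mem_adjoin_singleton A16 Xv
  · exact hY

def quartic : Polynomial A16 :=
  .X ^ 4 - .C ⟨_, Xv_sq_add_Yv_mem⟩ * .X ^ 2 + .C ⟨_, Xv_sq_mul_Yv_mem⟩

lemma quartic_monic : quartic.Monic := by
  unfold quartic
  monicity!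

lemma quartic_natDegree : quartic.natDegree = 4 := by
  unfold quartic
  compute_degree!

lemma aeval_Xv_quartic : Polynomial.aeval Xv quartic = 0 := by
  simp only [quartic, map_add, Polynomial.aeval_sub, map_pow, Polynomial.aeval_X, map_mul,
    Polynomial.aeval_C, Subalgebra.algebraMap_apply]
  ring

lemma span_Xv_pow_eq_top : Submodule.span A16 (Set.range fun i : Fin 4 => Xv ^ (i : ℕ)) = ⊤ := by
  have hspan := Submodule.span_range_natDegree_eq_adjoin quartic_monic aeval_Xv_quartic
  rw [quartic_natDegree, adjoin_Xv_eq_top, Algebra.top_toSubmodule] at hspan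
  rw [← hspan]
  congr
  ext
  simp [Fin.exists_iff]

def basisXvPow : Module.Basis (Fin 4) A16 B :=
  .mk linearIndependent_Xv_pow span_Xv_pow_eq_top.ge

end A16

theorem example_free_rank_four :
    Module.Free A16 (MvPolynomial (Fin 2) ℂ) ∧
    Module.Finite A16 (MvPolynomial (Fin 2) ℂ) ∧
    Module.finrank A16 (MvPolynomial (Fin 2) ℂ) = 4 := by
  refine ⟨.of_basis A16.basisXvPow, .of_basis A16.basisXvPow, ?_⟩
  rw [Module.finrank_eq_card_basis A16.basisXvPow, Fintype.card_fin]
end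
end

section
/- The contraction to A of the principal ideal of B = ℂ[X,Y] generated by X(Y−X²) equals the principal ideal of A generated by X²Y(Y−X²)²: (X(Y−X²)·B) ∩ A = X²Y(Y−X²)²·A. -/
noncomputable section

open MvPolynomial

lemma mem18 : Xv ^ 2 * Yv * (Yv - Xv ^ 2) ^ 2 ∈ A16 := by
  have hu : Xv ^ 2 * Yv ∈ A16 := Algebra.subset_adjoin (Set.mem_insert _ _)
  have hv : Xv ^ 2 + Yv ∈ A16 := Algebra.subset_adjoin (Set.mem_insert_of_mem _ rfl)
  have key : Xv ^ 2 * Yv * (Yv - Xv ^ 2) ^ 2 =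
      (Xv ^ 2 * Yv) * ((Xv ^ 2 + Yv) ^ 2 - 4 * (Xv ^ 2 * Yv)) := by ring
  rw [key]
  exact A16.mul_mem hu (A16.sub_mem (A16.pow_mem hv 2) (A16.mul_mem (ofNat_mem A16 4) hu))

/- ## Auxiliary material -/

private abbrev S1' := MvPolynomial (Fin 1) ℂ
private abbrev B2' := MvPolynomial (Fin 2) ℂ
private abbrev CT' := Polynomial ℂ

private lemma eval_via (P : B2') (c : S1') (g : CT') :
    (aeval ![g] : S1' →ₐ[ℂ] CT') ((Polynomial.eval c (finSuccEquiv ℂ 1 P))) =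
      aeval ![(aeval ![g] : S1' →ₐ[ℂ] CT') c, g] P := by
  have h : ((aeval ![g] : S1' →ₐ[ℂ] CT') : S1' →+* CT').comp
      ((Polynomial.evalRingHom c).comp ((finSuccEquiv ℂ 1) : B2' →+* Polynomial S1')) =
      ((aeval ![(aeval ![g] : S1' →ₐ[ℂ] CT') c, g] : B2' →ₐ[ℂ] CT') : B2' →+* CT') := by
    apply MvPolynomial.ringHom_ext
    · intro a
      simp [finSuccEquiv_apply, algebraMap_eq]
    · intro i
      refine Fin.cases ?_ ?_ i
      · simp [finSuccEquiv_X_zero]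
      · intro j
        simp [finSuccEquiv_X_succ]
  exact congrFun (congrArg (fun f => f.toFun) h) P

private lemma inj_aeval_one {g : CT'} (hg : Transcendental ℂ g) :
    Function.Injective (aeval ![g] : S1' →ₐ[ℂ] CT') :=
  algebraicIndependent_iff_transcendental.mpr hg

private lemma main_div (P : B2')
    (h1 : aeval ![0, Polynomial.X] P = (0 : CT'))
    (h2 : aeval ![Polynomial.X ^ 4, Polynomial.C 2 * Polynomial.X ^ 2] P = (0 : CT')) :
    X 0 * (X 0 - C (1/4 : ℂ) * (X 1) ^ 2) ∣ P := by
  set e := finSuccEquiv ℂ 1 with he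
  set c : S1' := C (1/4 : ℂ) * (X 0) ^ 2 with hc
  have hcne : c ≠ 0 := by
    simp [hc, MvPolynomial.X_ne_zero]
  have hA : Polynomial.X ∣ e P := by
    have hinj := inj_aeval_one (Polynomial.transcendental_X ℂ)
    have := eval_via P 0 Polynomial.X
    rw [map_zero, h1] at this
    have hz : Polynomial.eval 0 (e P) = 0 := by
      apply hinj; rw [this, map_zero]
    rw [Polynomial.X_dvd_iff, Polynomial.coeff_zero_eq_eval_zero, hz]
  have hB : Polynomial.X - Polynomial.C c ∣ e P := by
    have htr : Transcendental ℂ (Polynomial.C 2 * Polynomial.X ^ 2 : CT') := by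
      have := (Polynomial.transcendental_X ℂ).aeval (Polynomial.C 2 * Polynomial.X ^ 2 : CT')
        (by
          rw [Polynomial.natDegree_C_mul (two_ne_zero), Polynomial.natDegree_X_pow]
          norm_num)
        (by
          apply mem_nonZeroDivisors_of_ne_zero
          rw [Polynomial.leadingCoeff_mul, Polynomial.leadingCoeff_C, Polynomial.leadingCoeff_X_pow]
          norm_num)
      simpa using this
    have hinj := inj_aeval_one htr
    have hjc : (aeval ![Polynomial.C 2 * Polynomial.X ^ 2] : S1' →ₐ[ℂ] CT') c
        = Polynomial.X ^ 4 := by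
      simp only [hc, map_mul, map_pow, aeval_C, aeval_X, Matrix.cons_val_zero]
      rw [Polynomial.algebraMap_eq, mul_pow, ← Polynomial.C_pow, ← mul_assoc,
        ← Polynomial.C_mul]
      norm_num
      ring
    have := eval_via P c (Polynomial.C 2 * Polynomial.X ^ 2)
    rw [hjc, h2] at this
    have hz : Polynomial.eval c (e P) = 0 := by
      apply hinj; rw [this, map_zero]
    exact Polynomial.dvd_iff_isRoot.mpr hz
  have hnd : ¬ Polynomial.X ∣ (Polynomial.X - Polynomial.C c) := by
    intro h
    have : Polynomial.X ∣ Polynomial.C c := (dvd_sub_right dvd_rfl).mp ?_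
    · rw [Polynomial.X_dvd_iff, Polynomial.coeff_C] at this
      simp at this; exact hcne this
    · simpa using h
  obtain ⟨Q1, hQ1⟩ := hB
  have hA' : Polynomial.X ∣ Q1 := by
    rcases (Polynomial.prime_X).2.2 _ _ (hQ1 ▸ hA) with h | h
    · exact absurd h hnd
    · exact h
  obtain ⟨Q2, hQ2⟩ := hA'
  have key : e (X 0 * (X 0 - C (1/4 : ℂ) * (X 1) ^ 2)) =
      Polynomial.X * (Polynomial.X - Polynomial.C c) := by
    have h0 : e (X 0 : B2') = Polynomial.X := finSuccEquiv_X_zero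
    have h1' : e (X 1 : B2') = Polynomial.C (X 0) := by
      have : (X 1 : B2') = X (Fin.succ 0) := rfl
      rw [this, finSuccEquiv_X_succ]
    have hC : e (C (1/4 : ℂ) : B2') = Polynomial.C (C (1/4 : ℂ)) := by
      simp [he, finSuccEquiv_apply, algebraMap_eq]
    rw [map_mul, map_sub, map_mul, map_pow, h0, h1', hC, hc]
    rw [Polynomial.C_mul, Polynomial.C_pow]
  refine ⟨e.symm Q2, ?_⟩
  apply e.injective
  rw [map_mul, key, AlgEquiv.apply_symm_apply, hQ1, hQ2]
  ring

private def psi : B2' →ₐ[ℂ] B2' := aeval ![Xv ^ 2 * Yv, Xv ^ 2 + Yv]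

private lemma hrange : A16 = psi.range := by
  rw [A16, psi, ← Algebra.adjoin_range_eq_range_aeval]
  congr 1
  rw [Matrix.range_cons_cons_empty]

private def rho : B2' →ₐ[ℂ] CT' := aeval ![Polynomial.X, Polynomial.X ^ 2]
private def sig : B2' →ₐ[ℂ] CT' := aeval ![0, Polynomial.X]

private lemma hsig : sig.comp psi = aeval ![0, Polynomial.X] := by
  apply MvPolynomial.algHom_ext
  intro i
  fin_cases i <;> simp [sig, psi, Xv, Yv]

private lemma hrho : rho.comp psi
    = aeval ![Polynomial.X ^ 4, Polynomial.C 2 * Polynomial.X ^ 2] := by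
  apply MvPolynomial.algHom_ext
  intro i
  fin_cases i <;> simp [rho, psi, Xv, Yv] <;> ring_nf <;>
    rw [show ((2 : Polynomial ℂ) = Polynomial.C 2) from (map_ofNat Polynomial.C 2).symm]

theorem example_contraction :
    (Ideal.span {Xv * (Yv - Xv ^ 2)}).comap (algebraMap A16 (MvPolynomial (Fin 2) ℂ)) =
      Ideal.span {(⟨Xv ^ 2 * Yv * (Yv - Xv ^ 2) ^ 2, mem18⟩ : A16)} := by
  apply le_antisymm
  · rintro a ha
    rw [Ideal.mem_comap, Ideal.mem_span_singleton] at ha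
    obtain ⟨b, hb⟩ := ha
    have hco : (algebraMap A16 B2') a = (a : B2') := rfl
    rw [hco] at hb
    obtain ⟨P, hP0⟩ : (a : B2') ∈ psi.range := hrange ▸ a.2
    have hP : psi P = (a : B2') := hP0
    have h1 : aeval ![0, Polynomial.X] P = (0 : CT') := by
      calc aeval ![0, Polynomial.X] P = sig (psi P) := by rw [← hsig]; rfl
        _ = sig ((a : B2')) := by rw [hP]
        _ = 0 := by rw [hb]; simp [sig, Xv, Yv]
    have h2 : aeval ![Polynomial.X ^ 4, Polynomial.C 2 * Polynomial.X ^ 2] P = (0 : CT') := by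
      calc aeval ![Polynomial.X ^ 4, Polynomial.C 2 * Polynomial.X ^ 2] P
          = rho (psi P) := by rw [← hrho]; rfl
        _ = rho ((a : B2')) := by rw [hP]
        _ = 0 := by rw [hb]; simp [rho, Xv, Yv]
    obtain ⟨Q, hQ⟩ := main_div P h1 h2
    have e0 : psi (X 0) = Xv ^ 2 * Yv := by simp [psi]
    have e1 : psi (X 1) = Xv ^ 2 + Yv := by simp [psi]
    have eC : psi (C (1/4 : ℂ)) = C (1/4 : ℂ) := by simp [psi, algebraMap_eq]
    set g : B2' := psi (-(C (1/4 : ℂ) * Q)) with hg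
    have hgA : g ∈ A16 := by
      rw [hrange, hg]; exact ⟨_, rfl⟩
    rw [Ideal.mem_span_singleton]
    refine ⟨⟨g, hgA⟩, Subtype.ext ?_⟩
    show (a : B2') = (Xv ^ 2 * Yv * (Yv - Xv ^ 2) ^ 2) * g
    rw [← hP, hQ, hg]
    simp only [map_neg, map_mul, map_sub, map_pow, e0, e1, eC]
    have h4 : (C (1/4 : ℂ) : B2') * 4 = 1 := by
      rw [show ((4 : B2') = C (4 : ℂ)) from (map_ofNat C 4).symm, ← C_mul]
      norm_num
    linear_combination (-((Xv ^ 2 * Yv) ^ 2 * psi Q)) * h4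
  · rw [Ideal.span_le, Set.singleton_subset_iff, SetLike.mem_coe, Ideal.mem_comap,
      Ideal.mem_span_singleton]
    exact ⟨Xv * Yv * (Yv - Xv ^ 2), by show (Xv ^ 2 * Yv * (Yv - Xv ^ 2) ^ 2 : B2') = _; ring⟩
end
end
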